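/- arXiv:1902.10433 — 6 statements merged into one kernel-verified Lean document; each statement's English description precedes it below -/
import Mathlib

section
/- Let X be a countable set, p a probability mass function on X, η > 0, and l : X → ℝ with l(x) ∈ [0, C] for all x. Define a(x) = exp(-η·l(x)) and q(x) = p(x)·a(x) / Σ_{x'} p(x')·a(x'). Then Σ_{x : p(x) ≥ q(x)} (p(x) - q(x)) ≤ η·C/4. -/
/-!
Write `Z = ∑ p a` and `s = exp (-η C / 2)`, so that every `a x` and hence `Z` lie in `[s², 1]`.
Since `p x - q x = p x (Z - a x) / Z`, and on `[s², 1]` the positive part of `Z - a` lies below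
its chord `(1 - a)(Z - s²)/(1 - s²)`, the one-sided total variation is at most
`(1 - Z)(Z - s²) / ((1 - s²) Z)`. This is maximal at `Z = s`, where it equals
`(1 - s)/(1 + s) = tanh (η C / 4) ≤ η C / 4`.
-/

open Set

namespace Real

theorem sinh_le_mul_cosh {u : ℝ} (hu : 0 ≤ u) : sinh u ≤ u * cosh u := by
  have hderiv : ∀ x, HasDerivAt (fun x => x * cosh x - sinh x) (x * sinh x) x := fun x => by
    have h : HasDerivAt (fun x => x * cosh x - sinh x) (1 * cosh x + x * sinh x - cosh x) x :=
      ((hasDerivAt_id' x).mul (hasDerivAt_cosh x)).sub (hasDerivAt_sinh x)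
    convert h using 1
    ring
  have hmono : MonotoneOn (fun x => x * cosh x - sinh x) (Ici 0) :=
    monotoneOn_of_deriv_nonneg (convex_Ici 0)
      (fun x _ => (hderiv x).continuousAt.continuousWithinAt)
      (fun x _ => (hderiv x).differentiableAt.differentiableWithinAt)
      (fun x hx => by
        rw [interior_Ici] at hx
        rw [(hderiv x).deriv]
        exact mul_nonneg hx.le (sinh_nonneg_iff.mpr hx.le))
  simpa using hmono self_mem_Ici hu hu

theorem tanh_le_self {u : ℝ} (hu : 0 ≤ u) : tanh u ≤ u := by
  rw [tanh_eq_sinh_div_cosh, div_le_iff₀ (cosh_pos u)]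
  exact sinh_le_mul_cosh hu

theorem one_sub_exp_neg_div_one_add_exp_neg (x : ℝ) :
    (1 - exp (-x)) / (1 + exp (-x)) = tanh (x / 2) := by
  have hsq : exp (-x) = exp (-(x / 2)) * exp (-(x / 2)) := by rw [← exp_add]; ring_nf
  have hinv : exp (x / 2) * exp (-(x / 2)) = 1 := by rw [← exp_add]; simp
  rw [tanh_eq_sinh_div_cosh, sinh_eq, cosh_eq, hsq,
    div_eq_div_iff (by positivity) (by positivity)]
  linear_combination (-exp (-(x / 2))) * hinv

theorem exp_neg_mul_mem_Icc {η l C : ℝ} (hη : 0 ≤ η) (hl : l ∈ Icc 0 C) :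
    exp (-η * l) ∈ Icc (exp (-η * C)) 1 :=
  ⟨exp_le_exp.2 (by nlinarith [hl.2]), exp_le_one_iff.2 (by nlinarith [hl.1])⟩

end Real

theorem sub_le_chord {Z a m : ℝ} (hma : m ≤ a) (hZ : Z ≤ 1) (hm : m < 1) :
    Z - a ≤ (1 - a) * (Z - m) / (1 - m) := by
  rw [le_div_iff₀ (by linarith)]
  nlinarith

theorem sub_mul_div_le_chord {P Z a m : ℝ} (hP : 0 ≤ P) (hZ0 : 0 < Z) (hma : m ≤ a)
    (hZ1 : Z ≤ 1) (hm : m < 1) : P - P * a / Z ≤ P * (1 - a) * ((Z - m) / ((1 - m) * Z)) := by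
  have hchord := sub_le_chord hma hZ1 hm
  calc P - P * a / Z = P * (Z - a) / Z := by field_simp
    _ ≤ P * ((1 - a) * (Z - m) / (1 - m)) / Z := by gcongr
    _ = P * (1 - a) * ((Z - m) / ((1 - m) * Z)) := by field_simp

theorem one_sub_mul_sub_sq_div_le {Z s : ℝ} (hZ : 0 < Z) (hs0 : 0 ≤ s) (hs1 : s < 1) :
    (1 - Z) * (Z - s ^ 2) / ((1 - s ^ 2) * Z) ≤ (1 - s) / (1 + s) := by
  have hfactor : (1 - s ^ 2) * Z = (1 + s) * ((1 - s) * Z) := by ring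
  rw [hfactor, div_le_div_iff₀ (by positivity) (by positivity)]
  have hkey : (1 - Z) * (Z - s ^ 2) = (1 - s) ^ 2 * Z - (Z - s) ^ 2 := by ring
  nlinarith [sq_nonneg (Z - s), hkey]

theorem tsum_subtype_le_tsum_of_le {X : Type*} {s : Set X} {f g : X → ℝ}
    (hf : ∀ x ∈ s, 0 ≤ f x) (hfg : ∀ x ∈ s, f x ≤ g x) (hg : ∀ x, 0 ≤ g x) (hgs : Summable g) :
    ∑' x : s, f x ≤ ∑' x, g x := by
  have hfs : Summable fun x : s => f x :=
    .of_nonneg_of_le (fun x => hf x x.2) (fun x => hfg x x.2) (hgs.subtype s)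
  exact (hfs.tsum_le_tsum (fun x : s => hfg x x.2) (hgs.subtype s)).trans
    (hgs.tsum_subtype_le g s hg)

section Reweighting

variable {X : Type*} {p a : X → ℝ}

theorem summable_mul_of_mem_Icc {m M : ℝ} (hp0 : ∀ x, 0 ≤ p x) (hps : Summable p)
    (ha : ∀ x, a x ∈ Icc m M) : Summable fun x => p x * a x :=
  Summable.of_norm_bounded (hps.mul_right (max |m| |M|)) fun x => by
    rw [norm_mul, Real.norm_of_nonneg (hp0 x)]
    exact mul_le_mul_of_nonneg_left (abs_le_max_abs_abs (ha x).1 (ha x).2) (hp0 x)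

theorem tsum_mul_mem_Icc {m M : ℝ} (hp0 : ∀ x, 0 ≤ p x) (hps : Summable p)
    (hp1 : ∑' x, p x = 1) (ha : ∀ x, a x ∈ Icc m M) : ∑' x, p x * a x ∈ Icc m M := by
  have hpa := summable_mul_of_mem_Icc hp0 hps ha
  constructor
  · calc m = ∑' x, p x * m := by rw [tsum_mul_right, hp1, one_mul]
      _ ≤ ∑' x, p x * a x :=
        (hps.mul_right m).tsum_le_tsum (fun x => mul_le_mul_of_nonneg_left (ha x).1 (hp0 x)) hpa
  · calc ∑' x, p x * a x ≤ ∑' x, p x * M :=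
        hpa.tsum_le_tsum (fun x => mul_le_mul_of_nonneg_left (ha x).2 (hp0 x)) (hps.mul_right M)
      _ = M := by rw [tsum_mul_right, hp1, one_mul]

theorem tsum_sub_tilt_le {q : X → ℝ} {Z m : ℝ} (hm0 : 0 < m) (hm1 : m < 1)
    (hp0 : ∀ x, 0 ≤ p x) (hps : Summable p) (hp1 : ∑' x, p x = 1) (ha : ∀ x, a x ∈ Icc m 1)
    (hZ : ∑' x, p x * a x = Z) (hq : ∀ x, q x = p x * a x / Z) :
    ∑' x : {x : X // q x ≤ p x}, (p x.1 - q x.1) ≤ (1 - Z) * (Z - m) / ((1 - m) * Z) := by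
  have hpa := summable_mul_of_mem_Icc hp0 hps ha
  have hZm := hZ ▸ tsum_mul_mem_Icc hp0 hps hp1 ha
  set c := (Z - m) / ((1 - m) * Z)
  have hc0 : 0 ≤ c := div_nonneg (sub_nonneg.2 hZm.1) (by nlinarith [hZm.1])
  have hgap : ∑' x, p x * (1 - a x) = 1 - Z := by
    simp_rw [mul_one_sub]
    rw [hps.tsum_sub hpa, hp1, hZ]
  calc ∑' x : {x : X // q x ≤ p x}, (p x.1 - q x.1) ≤ ∑' x, p x * (1 - a x) * c :=
        tsum_subtype_le_tsum_of_le (s := {x | q x ≤ p x}) (fun x hx => sub_nonneg.2 hx)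
          (fun x _ => hq x ▸ sub_mul_div_le_chord (hp0 x) (hm0.trans_le hZm.1) (ha x).1 hZm.2 hm1)
          (fun x => mul_nonneg (mul_nonneg (hp0 x) (sub_nonneg.2 (ha x).2)) hc0)
          (((hps.sub hpa).congr fun x => by ring).mul_right c)
    _ = (1 - Z) * c := by rw [tsum_mul_right, hgap]
    _ = (1 - Z) * (Z - m) / ((1 - m) * Z) := (mul_div_assoc _ _ _).symm

end Reweighting

theorem stmt_0_general {X : Type*}
    (p q a l : X → ℝ) (η C : ℝ)
    (hη : 0 < η) (hC : 0 < C)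
    (hp0 : ∀ x, 0 ≤ p x) (hps : Summable p) (hp1 : ∑' x, p x = 1)
    (hl : ∀ x, l x ∈ Set.Icc (0 : ℝ) C)
    (ha : ∀ x, a x = Real.exp (-η * l x))
    (hq : ∀ x, q x = p x * a x / ∑' x', p x' * a x') :
    ∑' x : {x : X // q x ≤ p x}, (p x.1 - q x.1) ≤ η * C / 4 := by
  set s := Real.exp (-(η * C / 2)) with hs_def
  have hs1 : s < 1 := Real.exp_lt_one_iff.2 (by nlinarith)
  have hs_sq : s ^ 2 = Real.exp (-η * C) := by rw [hs_def, ← Real.exp_nat_mul]; ring_nf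
  have ha_mem : ∀ x, a x ∈ Icc (s ^ 2) 1 := fun x =>
    hs_sq ▸ ha x ▸ Real.exp_neg_mul_mem_Icc hη.le (hl x)
  have hZ0 : 0 < ∑' x, p x * a x :=
    (by positivity : 0 < s ^ 2).trans_le (tsum_mul_mem_Icc hp0 hps hp1 ha_mem).1
  calc ∑' x : {x : X // q x ≤ p x}, (p x.1 - q x.1)
      ≤ (1 - ∑' x, p x * a x) * (∑' x, p x * a x - s ^ 2) / ((1 - s ^ 2) * ∑' x, p x * a x) :=
        tsum_sub_tilt_le (by positivity) (pow_lt_one₀ (Real.exp_pos _).le hs1 two_ne_zero) hp0 hps hp1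
          ha_mem rfl hq
    _ ≤ (1 - s) / (1 + s) := one_sub_mul_sub_sq_div_le hZ0 (Real.exp_pos _).le hs1
    _ = Real.tanh (η * C / 4) := by rw [hs_def, Real.one_sub_exp_neg_div_one_add_exp_neg]; ring_nf
    _ ≤ η * C / 4 := Real.tanh_le_self (by positivity)

/-- Lemma 1 of the paper: total-variation shift under exponential reweighing.
If `p` is a probability mass function on a countable set `X`, losses `l x ∈ [0, C]`,
`a x = exp (-η l x)` and `q` is the normalized tilt `p·a / Σ p·a`, then the one-sided
total variation `Σ_{x : p x ≥ q x} (p x - q x)` is at most `η C / 4`. -/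
theorem stmt_0 {X : Type*} [Countable X] [Nonempty X]
    (p q a l : X → ℝ) (η C : ℝ)
    (hη : 0 < η) (hC : 0 < C)
    (hp0 : ∀ x, 0 ≤ p x) (hps : Summable p) (hp1 : ∑' x, p x = 1)
    (hl : ∀ x, l x ∈ Set.Icc (0 : ℝ) C)
    (ha : ∀ x, a x = Real.exp (-η * l x))
    (hq : ∀ x, q x = p x * a x / ∑' x', p x' * a x') :
    ∑' x : {x : X // q x ≤ p x}, (p x.1 - q x.1) ≤ η * C / 4 :=
  stmt_0_general p q a l η C hη hC hp0 hps hp1 hl ha hq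
end

section
/- Let T be a positive integer and D : {1,…,T} → ℕ a sequence of delays with t + D(t) ≤ T for all t (so D(T) = 0). Define 𝒟_t = {τ : τ + D(τ) ≤ t}. Then Σ_{t=1}^{T-1} |𝒟_t| + Σ_{t=1}^{T-1} D(t) = T(T-1)/2. -/
/-!
Count the pairs `(t, τ)` with `τ + D τ ≤ t ≤ T - 1` by `τ` instead of by `t`: feedback of round `τ`
is counted in the `T - (τ + D τ)` rounds after it arrives, and adding back its delay `D τ` leaves
`T - τ`, whose sum over `τ` is the Gauss sum `T (T - 1) / 2`.
-/

open Finset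

theorem card_filter_le_Icc_one (n a : ℕ) (ha : 1 ≤ a) :
    #{t ∈ Icc 1 n | a ≤ t} = n + 1 - a := by
  rw [show {t ∈ Icc 1 n | a ≤ t} = Icc a n by ext t; simp only [mem_filter, mem_Icc]; omega,
    Nat.card_Icc]

theorem sum_Icc_one_pred_of_eq_zero {M : Type*} [AddCommMonoid M] {f : ℕ → M} {n : ℕ}
    (hf : f n = 0) : ∑ i ∈ Icc 1 (n - 1), f i = ∑ i ∈ Icc 1 n, f i := by
  rcases n with _ | n
  · rfl
  · rw [sum_Icc_succ_top (by omega), hf, add_zero, Nat.add_sub_cancel]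

theorem sum_Icc_one_sub (n : ℕ) : ∑ i ∈ Icc 1 n, (n - i) = n * (n - 1) / 2 := by
  rw [← sum_range_id]
  refine sum_nbij' (n - ·) (n - ·) ?_ ?_ ?_ ?_ fun _ _ => rfl <;> intro i <;>
    simp only [mem_Icc, mem_range] <;> omega

theorem stmt_3_general (T : ℕ) (D : ℕ → ℕ)
    (hD : ∀ t ∈ Finset.Icc 1 T, t + D t ≤ T) :
    (∑ t ∈ Finset.Icc 1 (T - 1),
        ((Finset.Icc 1 T).filter (fun τ => τ + D τ ≤ t)).card)
      + ∑ t ∈ Finset.Icc 1 (T - 1), D t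
      = T * (T - 1) / 2 := by
  rcases Nat.eq_zero_or_pos T with rfl | hT
  · rfl
  have hswap : ∑ t ∈ Icc 1 (T - 1), #{τ ∈ Icc 1 T | τ + D τ ≤ t}
      = ∑ τ ∈ Icc 1 T, (T - (τ + D τ)) := by
    refine (sum_card_bipartiteAbove_eq_sum_card_bipartiteBelow
      (r := fun t τ => τ + D τ ≤ t)).trans (sum_congr rfl fun τ hτ => ?_)
    have hτ₁ := (mem_Icc.1 hτ).1
    rw [bipartiteBelow, card_filter_le_Icc_one _ _ (by omega)]
    omega
  have hDT : D T = 0 := by have := hD T (mem_Icc.2 ⟨hT, le_rfl⟩); omega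
  rw [hswap, sum_Icc_one_pred_of_eq_zero hDT, ← sum_add_distrib, ← sum_Icc_one_sub]
  exact sum_congr rfl fun τ hτ => by have := hD τ hτ; omega

/-- Lemma 2 of the paper: for delays `D t` with `t + D t ≤ T` (for `t = 1,…,T`) and
`𝒟_t = {τ ∈ {1,…,T} : τ + D τ ≤ t}`, one has
`Σ_{t=1}^{T-1} |𝒟_t| + Σ_{t=1}^{T-1} D t = T (T-1) / 2`. -/
theorem stmt_3 (T : ℕ) (hT : 0 < T) (D : ℕ → ℕ)
    (hD : ∀ t ∈ Finset.Icc 1 T, t + D t ≤ T) :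
    (∑ t ∈ Finset.Icc 1 (T - 1),
        ((Finset.Icc 1 T).filter (fun τ => τ + D τ ≤ t)).card)
      + ∑ t ∈ Finset.Icc 1 (T - 1), D t
      = T * (T - 1) / 2 :=
  stmt_3_general T D hD
end

section
/- Let N, T ≥ 1 and let p be the Fixed Share distribution on sequences N_T = (n_1,…,n_T) ∈ {1,…,N}^T defined by p(n_1) = 1/N and p(n_t | n_{t-1}) = α_t/N + (1-α_t)·𝟙[n_t = n_{t-1}] with α_t = 1/t. Then for any sequence N_T with K = |{t ∈ {2,…,T} : n_t ≠ n_{t-1}}| switches, -ln p(N_T) ≤ (K+1)·(ln N + ln T). -/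
/-!
Bound each transition probability from below by `1 - 1/t` at a step without a switch and by
`(1 - 1/t) / (N T)` at a switch (as `1/(t N) ≥ 1/(N T)`). The product of the factors `1 - 1/t`
over `2 ≤ t ≤ T` telescopes to `1/T`, so together with the prior `1/N` this gives
`p(N_T) ≥ (N T)⁻¹ ^ (K + 1)`; take logarithms.
-/

open Finset

lemma prod_Icc_one_sub_one_div {T : ℕ} (hT : 1 ≤ T) :
    ∏ t ∈ Icc 2 T, (1 - 1 / (t : ℝ)) = 1 / T := by
  induction T, hT using Nat.le_induction with
  | base => simp
  | succ T hT ih =>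
    rw [prod_Icc_succ_top (by omega), ih]
    have hT0 : (T : ℝ) ≠ 0 := by positivity
    push_cast
    field_simp
    ring

lemma one_sub_one_div_nonneg {t : ℝ} (ht : 1 ≤ t) : 0 ≤ 1 - 1 / t :=
  sub_nonneg.mpr (div_le_one_of_le₀ ht (by linarith))

lemma one_sub_one_div_mul_ite_le {t T N : ℝ} (p : Prop) [Decidable p]
    (ht : 1 ≤ t) (htT : t ≤ T) (hN : 0 < N) :
    (1 - 1 / t) * (if ¬p then (N * T)⁻¹ else 1) ≤
      1 / t * (1 / N) + (1 - 1 / t) * (if p then 1 else 0) := by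
  have ht0 : 0 < t := by linarith
  by_cases hp : p
  · simp only [hp, not_true_eq_false, if_false, if_true]
    have : 0 ≤ 1 / t * (1 / N) := by positivity
    linarith
  · simp only [hp, not_false_eq_true, if_true, if_false, mul_zero, add_zero]
    have hT0 : 0 < T := by linarith
    calc (1 - 1 / t) * (N * T)⁻¹ ≤ 1 * (N * T)⁻¹ := by
          gcongr; linarith [one_div_pos.mpr ht0]
      _ ≤ 1 / t * (1 / N) := by
          rw [one_mul, one_div_mul_one_div, one_div, mul_comm t]
          gcongr

lemma neg_log_le_of_inv_pow_le {a P : ℝ} {m : ℕ} (ha : 0 < a) (h : a⁻¹ ^ m ≤ P) :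
    -Real.log P ≤ m * Real.log a := by
  have := Real.log_le_log (by positivity) h
  rw [Real.log_pow, Real.log_inv] at this
  linarith

/-- Lemma 3 of the paper: Fixed Share probability lower bound. With uniform prior
`1/N`, switch probabilities `α_t = 1/t`, the probability of any sequence
`(n_1, …, n_T)` with `K` switches satisfies `-ln p(N_T) ≤ (K+1)(ln N + ln T)`. -/
theorem stmt_5 (N T : ℕ) (hN : 1 ≤ N) (hT : 1 ≤ T) (n : ℕ → Fin N)
    (P : ℝ)
    (hP : P = (1 / (N : ℝ)) *
        ∏ t ∈ Finset.Icc 2 T,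
          ((1 / (t : ℝ)) * (1 / (N : ℝ))
            + (1 - 1 / (t : ℝ)) * (if n t = n (t - 1) then 1 else 0)))
    (K : ℕ)
    (hK : K = ((Finset.Icc 2 T).filter (fun t => n t ≠ n (t - 1))).card) :
    -Real.log P ≤ (K + 1 : ℝ) * (Real.log N + Real.log T) := by
  have hN0 : (0 : ℝ) < N := by exact_mod_cast hN
  have hT0 : (0 : ℝ) < T := by exact_mod_cast hT
  have hIcc : ∀ t ∈ Icc 2 T, (1 : ℝ) ≤ t ∧ (t : ℝ) ≤ T := fun t ht => by
    rw [mem_Icc] at ht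
    exact ⟨by exact_mod_cast (by omega : 1 ≤ t), by exact_mod_cast ht.2⟩
  have hbound : ((N : ℝ) * T)⁻¹ ^ (K + 1) ≤ P := by
    calc ((N : ℝ) * T)⁻¹ ^ (K + 1)
        = 1 / N * ((∏ t ∈ Icc 2 T, (1 - 1 / (t : ℝ))) *
            ∏ t ∈ Icc 2 T, if n t ≠ n (t - 1) then ((N : ℝ) * T)⁻¹ else 1) := by
          rw [prod_Icc_one_sub_one_div hT, ← prod_filter, prod_const, ← hK, pow_succ]
          field_simp
      _ = 1 / N * ∏ t ∈ Icc 2 T,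
            (1 - 1 / (t : ℝ)) * if n t ≠ n (t - 1) then ((N : ℝ) * T)⁻¹ else 1 := by
          rw [prod_mul_distrib]
      _ ≤ P := by
          rw [hP]
          gcongr ?_ * ?_
          refine prod_le_prod (fun t ht => ?_) (fun t ht => ?_)
          · exact mul_nonneg (one_sub_one_div_nonneg (hIcc t ht).1) (by split_ifs <;> positivity)
          · exact one_sub_one_div_mul_ite_le _ (hIcc t ht).1 (hIcc t ht).2 hN0
  calc -Real.log P ≤ (K + 1 : ℕ) * Real.log (N * T) :=
        neg_log_le_of_inv_pow_le (mul_pos hN0 hT0) hbound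
    _ = (K + 1 : ℝ) * (Real.log N + Real.log T) := by
      rw [Real.log_mul hN0.ne' hT0.ne']
      push_cast
      ring
end

section
/- Let η, H > 0, N ≥ 1, and two probability vectors on {1,…,N}: w⁰(n) ∝ e^{-η A(n)} and w^D(n) ∝ e^{-η B(n)}, where A(n) - B(n) ∈ [0, m·H] for all n and some integer m ≥ 0. Then for any loss vector l ∈ [0,H]^N, |⟨w⁰, l⟩ - ⟨w^D, l⟩| ≤ η·H²·m/4. -/
/-!
Write `w⁰ ∝ p g` and `w^D ∝ p` with `p = e^{-ηB}` and `g = e^{-η(A-B)} ∈ [s², 1]`, where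
`s = e^{-ηmH/2}`. Centring the losses at `H/2` bounds the difference of expectations by `H/2`
times the `ℓ¹` distance of the weights, and that distance is the mean absolute deviation of `g`
under `w^D` divided by its mean `μ`. Bounding `|g - μ|` by its chord over `[s², 1]` and then
optimizing over `μ` gives the `ℓ¹` bound `2(1-s)/(1+s) = 2 tanh(ηmH/4) ≤ ηmH/2`.
-/

open Real

theorem abs_sub_le_chord {a b x μ : ℝ} (hx : x ∈ Set.Icc a b) (hμ : μ ∈ Set.Icc a b) :
    (b - a) * |x - μ| ≤ (b - x) * (μ - a) + (x - a) * (b - μ) := by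
  obtain ⟨hax, hxb⟩ := hx
  obtain ⟨haμ, hμb⟩ := hμ
  rcases le_total x μ with h | h
  · rw [abs_of_nonpos (sub_nonpos.2 h)]
    nlinarith [mul_nonneg (sub_nonneg.2 hax) (sub_nonneg.2 hμb)]
  · rw [abs_of_nonneg (sub_nonneg.2 h)]
    nlinarith [mul_nonneg (sub_nonneg.2 haμ) (sub_nonneg.2 hxb)]

theorem Finset.mul_sum_mul_abs_sub_le {ι : Type*} (s : Finset ι) {p x : ι → ℝ} {a b μ : ℝ}
    (hp : ∀ i ∈ s, 0 ≤ p i) (hx : ∀ i ∈ s, x i ∈ Set.Icc a b) (hμ : μ ∈ Set.Icc a b)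
    (hmean : ∑ i ∈ s, p i * x i = μ * ∑ i ∈ s, p i) :
    (b - a) * ∑ i ∈ s, p i * |x i - μ| ≤ 2 * (b - μ) * (μ - a) * ∑ i ∈ s, p i := by
  calc (b - a) * ∑ i ∈ s, p i * |x i - μ|
      ≤ ∑ i ∈ s, p i * ((b - x i) * (μ - a) + (x i - a) * (b - μ)) := by
        rw [Finset.mul_sum]
        refine Finset.sum_le_sum fun i hi => ?_
        rw [mul_left_comm]
        exact mul_le_mul_of_nonneg_left (abs_sub_le_chord (hx i hi) hμ) (hp i hi)
    _ = (b * (μ - a) - a * (b - μ)) * ∑ i ∈ s, p i + (b - μ - (μ - a)) * ∑ i ∈ s, p i * x i := by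
        simp only [Finset.mul_sum, ← Finset.sum_add_distrib]
        exact Finset.sum_congr rfl fun i _ => by ring
    _ = 2 * (b - μ) * (μ - a) * ∑ i ∈ s, p i := by
        rw [hmean]
        ring

-- `2 tanh (x / 2) ≤ x`, read off from `2 y / (y + 2) ≤ log (1 + y)` at `y = eˣ - 1`.
theorem two_mul_one_sub_exp_neg_div_le {x : ℝ} (hx : 0 ≤ x) :
    2 * (1 - exp (-x)) / (1 + exp (-x)) ≤ x := by
  have h := le_log_one_add_of_nonneg (x := exp x - 1) (by linarith [add_one_le_exp x])
  rw [add_sub_cancel, log_exp] at h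
  convert h using 1
  have hpos := exp_pos x
  rw [exp_neg, div_eq_div_iff (by positivity) (by linarith)]
  field_simp
  ring

section

variable {ι : Type*} [Fintype ι]

noncomputable def normalizeWeights (f : ι → ℝ) (i : ι) : ℝ := f i / ∑ j, f j

theorem sum_normalizeWeights {f : ι → ℝ} (hf : ∑ i, f i ≠ 0) :
    ∑ i, normalizeWeights f i = 1 := by
  simp only [normalizeWeights, ← Finset.sum_div, div_self hf]

theorem abs_sum_mul_sub_sum_mul_le {u v l : ι → ℝ} {H : ℝ} (huv : ∑ i, u i = ∑ i, v i)
    (hl : ∀ i, l i ∈ Set.Icc 0 H) :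
    |∑ i, u i * l i - ∑ i, v i * l i| ≤ H / 2 * ∑ i, |u i - v i| := by
  have hcentre : ∑ i, u i * l i - ∑ i, v i * l i = ∑ i, (u i - v i) * (l i - H / 2) := by
    simp only [sub_mul, mul_sub, Finset.sum_sub_distrib, ← Finset.sum_mul, huv]
    ring
  rw [hcentre, Finset.mul_sum]
  refine (Finset.abs_sum_le_sum_abs _ _).trans (Finset.sum_le_sum fun i _ => ?_)
  rw [abs_mul, mul_comm]
  exact mul_le_mul_of_nonneg_right
    (abs_sub_le_iff.2 ⟨by linarith [(hl i).2], by linarith [(hl i).1]⟩) (abs_nonneg _)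

theorem sum_abs_normalizeWeights_mul_sub_le {p g : ι → ℝ} {s : ℝ} (hp : ∀ i, 0 ≤ p i)
    (hZ : 0 < ∑ i, p i) (hs0 : 0 < s) (hs1 : s ≤ 1) (hg : ∀ i, g i ∈ Set.Icc (s ^ 2) 1) :
    ∑ i, |normalizeWeights (p * g) i - normalizeWeights p i| ≤ 2 * (1 - s) / (1 + s) := by
  rw [le_div_iff₀ (by positivity), mul_comm]
  set Z := ∑ i, p i
  set μ := (∑ i, p i * g i) / Z
  have hmean : ∑ i, p i * g i = μ * Z := (div_mul_cancel₀ _ hZ.ne').symm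
  have hμ : μ ∈ Set.Icc (s ^ 2) 1 := by
    constructor
    · rw [le_div_iff₀ hZ, Finset.mul_sum]
      exact Finset.sum_le_sum fun i _ => by nlinarith [(hg i).1, hp i]
    · rw [div_le_one hZ]
      exact Finset.sum_le_sum fun i _ => by nlinarith [(hg i).2, hp i]
  have hμ0 : 0 < μ := lt_of_lt_of_le (by positivity) hμ.1
  have hμZ : 0 < μ * Z := mul_pos hμ0 hZ
  have hdiff : ∀ i, |normalizeWeights (p * g) i - normalizeWeights p i|
      = p i * |g i - μ| / (μ * Z) := by
    intro i
    simp only [normalizeWeights, Pi.mul_apply, hmean]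
    have hcancel : p i * g i / (μ * Z) - p i / Z = p i * (g i - μ) / (μ * Z) := by
      field_simp
    rw [hcancel, abs_div, abs_mul, abs_of_nonneg (hp i), abs_of_pos hμZ]
  have hdev := Finset.univ.mul_sum_mul_abs_sub_le (fun i _ => hp i) (fun i _ => hg i) hμ hmean
  simp only [hdiff, ← Finset.sum_div]
  rw [mul_div_assoc', div_le_iff₀ hμZ]
  rcases hs1.lt_or_eq with hs1 | rfl
  · have hamgm : (1 - μ) * (μ - s ^ 2) ≤ μ * (1 - s) ^ 2 := by nlinarith [sq_nonneg (μ - s)]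
    have h1s : 0 < 1 - s := by linarith
    nlinarith [mul_le_mul_of_nonneg_left hamgm (by positivity : (0 : ℝ) ≤ 2 * Z)]
  · have hg1 : ∀ i, g i = 1 := fun i => le_antisymm (hg i).2 (by simpa using (hg i).1)
    have hμ1 : μ = 1 := le_antisymm hμ.2 (by simpa using hμ.1)
    simp [hg1, hμ1]

end

/-- Per-step perturbation bound for exponential weights: if `w⁰ n ∝ e^{-η A n}`,
`w^D n ∝ e^{-η B n}` with `A n - B n ∈ [0, m H]`, then for losses `l n ∈ [0, H]`,
`|⟨w⁰, l⟩ - ⟨w^D, l⟩| ≤ η H² m / 4`. -/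
theorem stmt_11 (N : ℕ) (hN : 1 ≤ N) (η H : ℝ) (hη : 0 < η) (hH : 0 < H)
    (m : ℕ) (A B : Fin N → ℝ)
    (hAB : ∀ n, A n - B n ∈ Set.Icc (0 : ℝ) (m * H))
    (w0 wD : Fin N → ℝ)
    (hw0 : ∀ n, w0 n = Real.exp (-η * A n) / ∑ n', Real.exp (-η * A n'))
    (hwD : ∀ n, wD n = Real.exp (-η * B n) / ∑ n', Real.exp (-η * B n'))
    (l : Fin N → ℝ) (hl : ∀ n, l n ∈ Set.Icc (0 : ℝ) H) :
    |(∑ n, w0 n * l n) - ∑ n, wD n * l n| ≤ η * H ^ 2 * m / 4 := by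
  have : Nonempty (Fin N) := ⟨⟨0, hN⟩⟩
  set p : Fin N → ℝ := fun n => exp (-η * B n)
  set g : Fin N → ℝ := fun n => exp (-η * (A n - B n))
  set x := η * (m * H) / 2 with hx
  have hw0' : w0 = normalizeWeights (p * g) := funext fun n => by
    simp only [hw0, normalizeWeights, Pi.mul_apply, p, g, ← exp_add]
    ring_nf
  have hwD' : wD = normalizeWeights p := funext hwD
  have hZ : 0 < ∑ n, p n := Finset.sum_pos (fun n _ => exp_pos _) Finset.univ_nonempty
  have hg : ∀ n, g n ∈ Set.Icc (exp (-x) ^ 2) 1 := fun n => by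
    obtain ⟨hAB0, hABm⟩ := hAB n
    rw [sq, ← exp_add]
    exact ⟨exp_le_exp.2 (by nlinarith [mul_le_mul_of_nonneg_left hABm hη.le]),
      exp_le_one_iff.2 (by nlinarith)⟩
  have hsum : ∑ n, w0 n = ∑ n, wD n := by
    rw [hw0', hwD', sum_normalizeWeights, sum_normalizeWeights hZ.ne']
    exact (Finset.sum_pos (fun n _ => mul_pos (exp_pos _) (exp_pos _)) Finset.univ_nonempty).ne'
  have hL1 : ∑ n, |w0 n - wD n| ≤ x := by
    rw [hw0', hwD']
    exact (sum_abs_normalizeWeights_mul_sub_le (fun n => (exp_pos _).le) hZ (exp_pos _)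
      (exp_le_one_iff.2 (by simp only [neg_nonpos]; positivity)) hg).trans
      (two_mul_one_sub_exp_neg_div_le (by positivity))
  calc |(∑ n, w0 n * l n) - ∑ n, wD n * l n| ≤ H / 2 * ∑ n, |w0 n - wD n| :=
        abs_sum_mul_sub_sum_mul_le hsum hl
    _ ≤ H / 2 * x := by gcongr
    _ = η * H ^ 2 * m / 4 := by ring
end

section
/- Let η, H > 0, T ≥ 1, N ≥ 1, losses l_t ∈ [0,H]^N, and delays D(t) with t + D(t) ≤ T. Let 𝒟_t = {τ : τ + D(τ) ≤ t}. Let H_T⁰ be the cumulative loss of Hedge with weights w_t⁰(n) ∝ e^{-η Σ_{τ<t} l_τ(n)} and H_T^𝒟 the loss of delayed Hedge with w_t^𝒟(n) ∝ e^{-η Σ_{τ∈𝒟_{t-1}} l_τ(n)} (uniform prior in both). Then |H_T⁰ - H_T^𝒟| ≤ (η H²/4)·Σ_{t=1}^T D(t). -/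
/-!
In round `t` both players use Gibbs weights `exp (-η Lₙ) / Z`; the cumulative loss seen by the
undelayed player exceeds the delayed player's by the losses `E` of the rounds still pending. Along
`A + s • E`, `s ∈ [0, η]`, the Gibbs mean of the current loss has derivative `-Cov(E, loss)`, which
Grüss' inequality bounds by `(H · #pending) · H / 4`. The mean value theorem gives the per-round
bound `η H² #pending / 4`, and by double counting the numbers of pending rounds sum to `Σ D t`.
-/

open Finset Real

section WeightedMoments

variable {ι : Type*} [Fintype ι]

def weightedMean (w X : ι → ℝ) : ℝ := ∑ i, w i * X i

def weightedCov (w X Y : ι → ℝ) : ℝ :=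
  weightedMean w (X * Y) - weightedMean w X * weightedMean w Y

variable {w : ι → ℝ}

theorem weightedCov_eq_sum_mul_sub_mul_sub (hw : ∑ i, w i = 1) (X Y : ι → ℝ) :
    weightedCov w X Y =
      ∑ i, w i * ((X i - weightedMean w X) * (Y i - weightedMean w Y)) := by
  set μ := weightedMean w X
  set ν := weightedMean w Y
  calc weightedCov w X Y
      = ∑ i, (w i * (X i * Y i) - ν * (w i * X i) - μ * (w i * Y i) + μ * ν * w i) := by
        simp only [sum_add_distrib, sum_sub_distrib, ← mul_sum, hw]
        simp only [weightedCov, weightedMean, Pi.mul_apply, μ, ν]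
        ring
    _ = _ := sum_congr rfl fun i _ => by ring

theorem weightedCov_sq_le (hw₀ : ∀ i, 0 ≤ w i) (hw : ∑ i, w i = 1) (X Y : ι → ℝ) :
    weightedCov w X Y ^ 2 ≤ weightedCov w X X * weightedCov w Y Y := by
  simp only [weightedCov_eq_sum_mul_sub_mul_sub hw]
  exact sum_sq_le_sum_mul_sum_of_sq_le_mul _
    (fun i _ => mul_nonneg (hw₀ i) (mul_self_nonneg _))
    (fun i _ => mul_nonneg (hw₀ i) (mul_self_nonneg _)) (fun i _ => le_of_eq (by ring))

/-- Popoviciu's inequality. -/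
theorem weightedCov_self_le (hw₀ : ∀ i, 0 ≤ w i) (hw : ∑ i, w i = 1) {X : ι → ℝ} {a b : ℝ}
    (hX : ∀ i, X i ∈ Set.Icc a b) : weightedCov w X X ≤ ((b - a) / 2) ^ 2 := by
  set μ := weightedMean w X
  have hgap : 0 ≤ ∑ i, w i * ((b - X i) * (X i - a)) :=
    sum_nonneg fun i _ =>
      mul_nonneg (hw₀ i) (mul_nonneg (sub_nonneg.2 (hX i).2) (sub_nonneg.2 (hX i).1))
  have hexpand : ∑ i, w i * ((b - X i) * (X i - a))
      = (a + b) * μ - a * b - weightedMean w (X * X) := by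
    calc ∑ i, w i * ((b - X i) * (X i - a))
        = ∑ i, ((a + b) * (w i * X i) - a * b * w i - w i * (X i * X i)) :=
          sum_congr rfl fun i _ => by ring
      _ = _ := by
          simp only [sum_sub_distrib, ← mul_sum, hw, weightedMean, Pi.mul_apply, μ]
          ring
  rw [weightedCov]
  nlinarith [sq_nonneg (μ - (a + b) / 2)]

/-- Grüss' inequality. -/
theorem abs_weightedCov_le [Nonempty ι] (hw₀ : ∀ i, 0 ≤ w i) (hw : ∑ i, w i = 1)
    {X Y : ι → ℝ} {a b c d : ℝ} (hX : ∀ i, X i ∈ Set.Icc a b) (hY : ∀ i, Y i ∈ Set.Icc c d) :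
    |weightedCov w X Y| ≤ (b - a) * (d - c) / 4 := by
  obtain ⟨i⟩ := ‹Nonempty ι›
  have hab : 0 ≤ b - a := sub_nonneg.2 ((hX i).1.trans (hX i).2)
  have hcd : 0 ≤ d - c := sub_nonneg.2 ((hY i).1.trans (hY i).2)
  have hvar : ∀ Z : ι → ℝ, 0 ≤ weightedCov w Z Z := fun Z => by
    rw [weightedCov_eq_sum_mul_sub_mul_sub hw]
    exact sum_nonneg fun i _ => mul_nonneg (hw₀ i) (mul_self_nonneg _)
  refine abs_le_of_sq_le_sq ?_ (by positivity)
  calc weightedCov w X Y ^ 2 ≤ weightedCov w X X * weightedCov w Y Y :=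
        weightedCov_sq_le hw₀ hw X Y
    _ ≤ ((b - a) / 2) ^ 2 * ((d - c) / 2) ^ 2 :=
      mul_le_mul (weightedCov_self_le hw₀ hw hX) (weightedCov_self_le hw₀ hw hY) (hvar Y)
        (sq_nonneg _)
    _ = ((b - a) * (d - c) / 4) ^ 2 := by ring

end WeightedMoments

section GibbsWeights

variable {ι : Type*} [Fintype ι]

noncomputable def gibbsWeights (A : ι → ℝ) (i : ι) : ℝ := exp (-A i) / ∑ j, exp (-A j)

theorem gibbsWeights_nonneg (A : ι → ℝ) (i : ι) : 0 ≤ gibbsWeights A i :=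
  div_nonneg (exp_pos _).le (sum_nonneg fun _ _ => (exp_pos _).le)

theorem sum_gibbsWeights [Nonempty ι] (A : ι → ℝ) : ∑ i, gibbsWeights A i = 1 := by
  simp only [gibbsWeights, ← sum_div]
  exact div_self (sum_pos (fun j _ => exp_pos _) univ_nonempty).ne'

theorem weightedMean_gibbsWeights (A X : ι → ℝ) :
    weightedMean (gibbsWeights A) X = (∑ i, exp (-A i) * X i) / ∑ i, exp (-A i) := by
  simp only [weightedMean, gibbsWeights, div_mul_eq_mul_div, ← sum_div]

theorem hasDerivAt_sum_exp_neg_add_smul_mul (A E X : ι → ℝ) (s : ℝ) :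
    HasDerivAt (fun s => ∑ i, exp (-(A + s • E) i) * X i)
      (-∑ i, exp (-(A + s • E) i) * (E * X) i) s := by
  have hterm (i : ι) : HasDerivAt (fun s => exp (-(A + s • E) i) * X i)
      (-(exp (-(A + s • E) i) * (E * X) i)) s := by
    have hlin : HasDerivAt (fun s : ℝ => -(A + s • E) i) (-E i) s := by
      simp only [Pi.add_apply, Pi.smul_apply, smul_eq_mul]
      simpa using (((hasDerivAt_id' s).mul_const (E i)).const_add (A i)).fun_neg
    exact (hlin.exp.mul_const (X i)).congr_deriv (by rw [Pi.mul_apply]; ring)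
  rw [← sum_neg_distrib]
  exact HasDerivAt.fun_sum fun i _ => hterm i

theorem hasDerivAt_weightedMean_gibbsWeights [Nonempty ι] (A E X : ι → ℝ) (s : ℝ) :
    HasDerivAt (fun s => weightedMean (gibbsWeights (A + s • E)) X)
      (-weightedCov (gibbsWeights (A + s • E)) E X) s := by
  have hZ := hasDerivAt_sum_exp_neg_add_smul_mul A E 1 s
  have hF := hasDerivAt_sum_exp_neg_add_smul_mul A E X s
  simp only [mul_one, Pi.one_apply] at hZ
  have hZpos : 0 < ∑ i, exp (-(A + s • E) i) :=
    sum_pos (fun i _ => exp_pos _) univ_nonempty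
  have hmean : (fun s : ℝ => weightedMean (gibbsWeights (A + s • E)) X)
      = fun s => (∑ i, exp (-(A + s • E) i) * X i) / ∑ i, exp (-(A + s • E) i) :=
    funext fun s => weightedMean_gibbsWeights _ X
  rw [hmean]
  refine (hF.fun_div hZ hZpos.ne').congr_deriv ?_
  simp only [weightedCov, weightedMean_gibbsWeights, Pi.mul_apply]
  field_simp
  ring

theorem abs_weightedMean_gibbsWeights_add_smul_sub_le [Nonempty ι] (A : ι → ℝ) {E X : ι → ℝ}
    {η a b c d : ℝ} (hη : 0 ≤ η) (hE : ∀ i, E i ∈ Set.Icc a b) (hX : ∀ i, X i ∈ Set.Icc c d) :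
    |weightedMean (gibbsWeights (A + η • E)) X - weightedMean (gibbsWeights A) X|
      ≤ η * ((b - a) * (d - c) / 4) := by
  have hmvt := norm_image_sub_le_of_norm_deriv_le_segment'
    (fun s _ => (hasDerivAt_weightedMean_gibbsWeights A E X s).hasDerivWithinAt)
    (fun s _ => by
      rw [norm_neg, Real.norm_eq_abs]
      exact abs_weightedCov_le (gibbsWeights_nonneg _) (sum_gibbsWeights _) hE hX)
    η (Set.right_mem_Icc.2 hη)
  simpa [Real.norm_eq_abs, mul_comm] using hmvt

theorem abs_weightedMean_gibbsWeights_add_sum_sub_le [Nonempty ι]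
    {η H : ℝ} (hη : 0 ≤ η) (A : ι → ℝ) (p : Finset ℕ) {l : ℕ → ι → ℝ}
    (hl : ∀ τ ∈ p, ∀ i, l τ i ∈ Set.Icc 0 H) {X : ι → ℝ} (hX : ∀ i, X i ∈ Set.Icc 0 H) :
    |weightedMean (gibbsWeights fun i => η * (A i + ∑ τ ∈ p, l τ i)) X
        - weightedMean (gibbsWeights fun i => η * A i) X| ≤ η * H ^ 2 / 4 * #p := by
  have hE : ∀ i, ∑ τ ∈ p, l τ i ∈ Set.Icc 0 (#p * H) := fun i =>
    ⟨sum_nonneg fun τ hτ => (hl τ hτ i).1,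
      (sum_le_card_nsmul p _ H fun τ hτ => (hl τ hτ i).2).trans_eq (nsmul_eq_mul _ _)⟩
  have hsplit : (fun i => η * (A i + ∑ τ ∈ p, l τ i))
      = (fun i => η * A i) + η • fun i => ∑ τ ∈ p, l τ i := by
    funext i
    simp only [Pi.add_apply, Pi.smul_apply, smul_eq_mul, mul_add]
  rw [hsplit]
  refine (abs_weightedMean_gibbsWeights_add_smul_sub_le _ hη hE hX).trans_eq ?_
  ring

end GibbsWeights

section Delays

variable (D : ℕ → ℕ)

/-- The rounds before `t` whose feedback is still outstanding when round `t` is played. -/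
def pending (t : ℕ) : Finset ℕ := (Icc 1 (t - 1)).filter fun τ => t ≤ τ + D τ

variable {D}

theorem sum_delivered_add_sum_pending {M : Type*} [AddCommMonoid M] {T t : ℕ} (ht : t ≤ T)
    (f : ℕ → M) :
    ∑ τ ∈ (Icc 1 T).filter (fun τ => τ + D τ ≤ t - 1), f τ + ∑ τ ∈ pending D t, f τ
      = ∑ τ ∈ Icc 1 (t - 1), f τ := by
  have hdelivered : (Icc 1 T).filter (fun τ => τ + D τ ≤ t - 1)
      = (Icc 1 (t - 1)).filter fun τ => ¬ t ≤ τ + D τ := by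
    ext τ
    simp only [mem_filter, mem_Icc]
    omega
  rw [hdelivered, pending, add_comm]
  exact sum_filter_add_sum_filter_not _ _ _

theorem pending_subset_Icc {T t : ℕ} (ht : t ≤ T) : pending D t ⊆ Icc 1 T := fun τ hτ => by
  simp only [pending, mem_filter, mem_Icc] at hτ ⊢
  omega

/-- Each round `τ` is pending exactly during the `D τ` rounds `τ + 1, …, τ + D τ`. -/
theorem sum_card_pending {T : ℕ} (hD : ∀ t ∈ Icc 1 T, t + D t ≤ T) :
    ∑ t ∈ Icc 1 T, #(pending D t) = ∑ t ∈ Icc 1 T, D t := by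
  let r : ℕ → ℕ → Prop := fun τ t => τ < t ∧ t ≤ τ + D τ
  have hcount :=
    sum_card_bipartiteAbove_eq_sum_card_bipartiteBelow r (s := Icc 1 T) (t := Icc 1 T)
  have habove : ∀ τ ∈ Icc 1 T, (Icc 1 T).bipartiteAbove r τ = Icc (τ + 1) (τ + D τ) := by
    intro τ hτ
    have := hD τ hτ
    ext t
    simp only [mem_bipartiteAbove, mem_Icc, r]
    omega
  have hbelow : ∀ t ∈ Icc 1 T, (Icc 1 T).bipartiteBelow r t = pending D t := by
    intro t ht
    ext τ
    simp only [mem_bipartiteBelow, pending, mem_filter, mem_Icc, r] at ht ⊢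
    omega
  calc ∑ t ∈ Icc 1 T, #(pending D t)
      = ∑ t ∈ Icc 1 T, #((Icc 1 T).bipartiteBelow r t) :=
        sum_congr rfl fun t ht => by rw [hbelow t ht]
    _ = ∑ τ ∈ Icc 1 T, #((Icc 1 T).bipartiteAbove r τ) := hcount.symm
    _ = ∑ τ ∈ Icc 1 T, D τ :=
        sum_congr rfl fun τ hτ => by rw [habove τ hτ, Nat.card_Icc]; omega

end Delays

theorem stmt_13_general (N T : ℕ) (hN : 1 ≤ N) (η H : ℝ)
    (hη : 0 < η) (l : ℕ → Fin N → ℝ)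
    (hl : ∀ t ∈ Finset.Icc 1 T, ∀ n, l t n ∈ Set.Icc (0 : ℝ) H)
    (D : ℕ → ℕ) (hD : ∀ t ∈ Finset.Icc 1 T, t + D t ≤ T)
    (𝒟 : ℕ → Finset ℕ)
    (h𝒟 : ∀ t, 𝒟 t = (Finset.Icc 1 T).filter (fun τ => τ + D τ ≤ t))
    (w0 wD : ℕ → Fin N → ℝ)
    (hw0 : ∀ t n, w0 t n =
      Real.exp (-η * ∑ τ ∈ Finset.Icc 1 (t - 1), l τ n) /
        ∑ n', Real.exp (-η * ∑ τ ∈ Finset.Icc 1 (t - 1), l τ n'))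
    (hwD : ∀ t n, wD t n =
      Real.exp (-η * ∑ τ ∈ 𝒟 (t - 1), l τ n) /
        ∑ n', Real.exp (-η * ∑ τ ∈ 𝒟 (t - 1), l τ n')) :
    |(∑ t ∈ Finset.Icc 1 T, ∑ n, w0 t n * l t n)
        - ∑ t ∈ Finset.Icc 1 T, ∑ n, wD t n * l t n|
      ≤ η * H ^ 2 / 4 * ∑ t ∈ Finset.Icc 1 T, (D t : ℝ) := by
  have : Nonempty (Fin N) := Fin.pos_iff_nonempty.mp hN
  have hround : ∀ t ∈ Icc 1 T, |∑ n, w0 t n * l t n - ∑ n, wD t n * l t n|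
      ≤ η * H ^ 2 / 4 * #(pending D t) := by
    intro t ht
    have htT : t ≤ T := (mem_Icc.1 ht).2
    have hw0t : w0 t = gibbsWeights fun n =>
        η * (∑ τ ∈ 𝒟 (t - 1), l τ n + ∑ τ ∈ pending D t, l τ n) := by
      funext n
      simp only [hw0, gibbsWeights, h𝒟, sum_delivered_add_sum_pending htT, neg_mul]
    have hwDt : wD t = gibbsWeights fun n => η * ∑ τ ∈ 𝒟 (t - 1), l τ n := by
      funext n
      simp only [hwD, gibbsWeights, neg_mul]
    rw [hw0t, hwDt]
    exact abs_weightedMean_gibbsWeights_add_sum_sub_le hη.le _ _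
      (fun τ hτ => hl τ (pending_subset_Icc htT hτ)) (hl t ht)
  calc _ = |∑ t ∈ Icc 1 T, (∑ n, w0 t n * l t n - ∑ n, wD t n * l t n)| := by
        rw [sum_sub_distrib]
    _ ≤ ∑ t ∈ Icc 1 T, |∑ n, w0 t n * l t n - ∑ n, wD t n * l t n| := abs_sum_le_sum_abs _ _
    _ ≤ ∑ t ∈ Icc 1 T, η * H ^ 2 / 4 * #(pending D t) := sum_le_sum hround
    _ = η * H ^ 2 / 4 * ∑ t ∈ Icc 1 T, (D t : ℝ) := by
        rw [← mul_sum]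
        exact congrArg _ (mod_cast sum_card_pending hD)

/-- Step 1 of the proof of Theorem 1: the cumulative losses of non-delayed Hedge and
delayed Hedge (both with uniform prior) differ by at most `(η H²/4) Σ_t D t`. -/
theorem stmt_13 (N T : ℕ) (hN : 1 ≤ N) (hT : 1 ≤ T) (η H : ℝ)
    (hη : 0 < η) (hH : 0 < H) (l : ℕ → Fin N → ℝ)
    (hl : ∀ t ∈ Finset.Icc 1 T, ∀ n, l t n ∈ Set.Icc (0 : ℝ) H)
    (D : ℕ → ℕ) (hD : ∀ t ∈ Finset.Icc 1 T, t + D t ≤ T)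
    (𝒟 : ℕ → Finset ℕ)
    (h𝒟 : ∀ t, 𝒟 t = (Finset.Icc 1 T).filter (fun τ => τ + D τ ≤ t))
    (w0 wD : ℕ → Fin N → ℝ)
    (hw0 : ∀ t n, w0 t n =
      Real.exp (-η * ∑ τ ∈ Finset.Icc 1 (t - 1), l τ n) /
        ∑ n', Real.exp (-η * ∑ τ ∈ Finset.Icc 1 (t - 1), l τ n'))
    (hwD : ∀ t n, wD t n =
      Real.exp (-η * ∑ τ ∈ 𝒟 (t - 1), l τ n) /
        ∑ n', Real.exp (-η * ∑ τ ∈ 𝒟 (t - 1), l τ n')) :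
    |(∑ t ∈ Finset.Icc 1 T, ∑ n, w0 t n * l t n)
        - ∑ t ∈ Finset.Icc 1 T, ∑ n, wD t n * l t n|
      ≤ η * H ^ 2 / 4 * ∑ t ∈ Finset.Icc 1 T, (D t : ℝ) :=
  stmt_13_general N T hN η H hη l hl D hD 𝒟 h𝒟 w0 wD hw0 hwD
end

section
/- Let η, H > 0, N ≥ 1, T ≥ 1, losses l_t ∈ [0,H]^N, delays D(t) with t + D(t) ≤ T, switch probabilities α_t = 1/t, and let the delayed Fixed Share algorithm use weights w_t = posterior p(n_t | revealed losses) under the Fixed Share Markov model with uniform prior. Then for every sequence N_T = (n_1,…,n_T) with K switches, Σ_{t=1}^T ⟨w_t, l_t⟩ - Σ_{t=1}^T l_t(n_t) ≤ (K+1)(ln N + ln T)/η + η H² T/8 + (η H²/4)·Σ_{t=1}^T D(t). -/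
/-!
Let `Z(S) = ∑_σ p(σ) exp (-η ∑_{τ ∈ S} l_τ(σ_τ))`, so that `w_t` is the marginal at time `t` of
the posterior `p(σ) exp (…) / Z(𝒟_{t-1})`. With no delay, Hoeffding's lemma for this posterior
gives `η ⟨w_t, l_t⟩ ≤ log Z(<t) - log Z(≤t) + η² H² / 8`. Each loss that is still missing at time
`t` only tilts the posterior by a factor `exp (-η l_τ)`, and such a tilt moves the mean of a
`[0, H]`-valued loss by at most `η H² / 4`, because along the tilt its derivative is a covariance,
bounded by `H² / 4`. Summing over `t`, `log Z` telescopes to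
`log Z(∅) - log Z(all) ≤ -log p(ν) + η ∑_t l_t(ν_t)`, and the Fixed Share prior satisfies
`p(ν) ≥ (N T)^{-(K+1)}`: the transition into round `t` has probability at least `(t-1)/t`, times
`1/(N T)` at a switch, and `∏_t (t-1)/t = 1/T`.
-/

open Finset Real

section WeightedMoments

variable {ι : Type*} [Fintype ι] {w u v : ι → ℝ} {H : ℝ}

lemma sum_mul_sq_mul_sum_sub_sq_le (hw : ∀ i, 0 ≤ w i) (hu : ∀ i, u i ∈ Set.Icc 0 H) :
    (∑ i, w i * u i ^ 2) * ∑ i, w i - (∑ i, w i * u i) ^ 2 ≤ H ^ 2 / 4 * (∑ i, w i) ^ 2 := by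
  have hsq : ∑ i, w i * u i ^ 2 ≤ H * ∑ i, w i * u i := by
    rw [mul_sum]
    exact sum_le_sum fun i _ => by
      nlinarith [mul_nonneg (hw i) (mul_nonneg (hu i).1 (sub_nonneg.2 (hu i).2))]
  have hW : 0 ≤ ∑ i, w i := sum_nonneg fun i _ => hw i
  nlinarith [mul_le_mul_of_nonneg_right hsq hW, sq_nonneg (2 * ∑ i, w i * u i - H * ∑ i, w i)]

/-- Covariance is bounded by the mean of the two variances, which are at most `H² / 4`. -/
lemma sum_mul_mul_mul_sum_sub_le (hw : ∀ i, 0 ≤ w i) (hu : ∀ i, u i ∈ Set.Icc 0 H)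
    (hv : ∀ i, v i ∈ Set.Icc 0 H) :
    (∑ i, w i * u i * v i) * ∑ i, w i - (∑ i, w i * u i) * ∑ i, w i * v i
      ≤ H ^ 2 / 4 * (∑ i, w i) ^ 2 := by
  have hdiff : (∑ i, w i * (u i - v i)) ^ 2 ≤ (∑ i, w i * (u i - v i) ^ 2) * ∑ i, w i := by
    rw [mul_comm]
    exact sum_sq_le_sum_mul_sum_of_sq_le_mul _ (fun i _ => hw i)
      (fun i _ => mul_nonneg (hw i) (sq_nonneg _)) fun i _ => le_of_eq (by ring)
  have hvar_u := sum_mul_sq_mul_sum_sub_sq_le hw hu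
  have hvar_v := sum_mul_sq_mul_sum_sub_sq_le hw hv
  have hsq : ∑ i, w i * (u i - v i) ^ 2
      = ∑ i, w i * u i ^ 2 - 2 * ∑ i, w i * u i * v i + ∑ i, w i * v i ^ 2 := by
    rw [mul_sum, ← sum_sub_distrib, ← sum_add_distrib]
    exact sum_congr rfl fun i _ => by ring
  have hlin : ∑ i, w i * (u i - v i) = ∑ i, w i * u i - ∑ i, w i * v i := by
    rw [← sum_sub_distrib]
    exact sum_congr rfl fun i _ => by ring
  rw [hsq, hlin] at hdiff
  linarith

end WeightedMoments

section Tilting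

variable {ι : Type*} [Fintype ι]

lemma centerMass_univ_eq_div (c u : ι → ℝ) :
    univ.centerMass c u = (∑ i, c i * u i) / ∑ i, c i := by
  simp [centerMass, div_eq_inv_mul]

lemma sum_fiber_div_mul_eq_centerMass {α : Type*} [Fintype α] [DecidableEq α]
    (c : ι → ℝ) (g : ι → α) (u : α → ℝ) :
    ∑ a, (∑ i with g i = a, c i) / (∑ i, c i) * u a
      = univ.centerMass c (fun i => u (g i)) := by
  simp only [centerMass_univ_eq_div, div_mul_eq_mul_div, ← sum_div, sum_mul]
  rw [← sum_fiberwise univ g (fun i => c i * u (g i))]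
  congr 1
  exact sum_congr rfl fun a _ => sum_congr rfl fun i hi => by rw [(mem_filter.1 hi).2]

lemma hasDerivAt_sum_mul_exp (c v f : ι → ℝ) (β : ℝ) :
    HasDerivAt (fun β => ∑ i, c i * exp (-β * v i) * f i)
      (-∑ i, c i * exp (-β * v i) * f i * v i) β := by
  refine (HasDerivAt.fun_sum (u := univ) fun i _ =>
    (((hasDerivAt_neg β).mul_const (v i)).exp.const_mul (c i)).mul_const (f i)).congr_deriv ?_
  rw [← sum_neg_distrib]
  exact sum_congr rfl fun i _ => by ring

variable [Nonempty ι] {c u v : ι → ℝ} {H η : ℝ}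

lemma centerMass_le_centerMass_mul_exp (hc : ∀ i, 0 < c i) (hη : 0 ≤ η)
    (hu : ∀ i, u i ∈ Set.Icc 0 H) (hv : ∀ i, v i ∈ Set.Icc 0 H) :
    univ.centerMass c u ≤ univ.centerMass (fun i => c i * exp (-η * v i)) u + η * (H ^ 2 / 4) := by
  have hpos : ∀ β, 0 < ∑ i, c i * exp (-β * v i) := fun β =>
    sum_pos (fun i _ => mul_pos (hc i) (exp_pos _)) univ_nonempty
  have hden : ∀ β, HasDerivAt (fun β => ∑ i, c i * exp (-β * v i))
      (-∑ i, c i * exp (-β * v i) * v i) β := fun β => by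
    simpa using hasDerivAt_sum_mul_exp c v (fun _ => 1) β
  have hderiv : ∀ β, HasDerivAt (fun β => (∑ i, c i * exp (-β * v i) * u i)
        / (∑ i, c i * exp (-β * v i)) + β * (H ^ 2 / 4))
      (((-∑ i, c i * exp (-β * v i) * u i * v i) * (∑ i, c i * exp (-β * v i))
        - (∑ i, c i * exp (-β * v i) * u i) * -∑ i, c i * exp (-β * v i) * v i)
          / (∑ i, c i * exp (-β * v i)) ^ 2 + 1 * (H ^ 2 / 4)) β := fun β =>
    ((hasDerivAt_sum_mul_exp c v u β).div (hden β) (hpos β).ne').add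
      ((hasDerivAt_id β).mul_const _)
  have hmono := monotone_of_hasDerivAt_nonneg hderiv fun β => by
    have hcov := sum_mul_mul_mul_sum_sub_le (w := fun i => c i * exp (-β * v i))
      (fun i => (mul_pos (hc i) (exp_pos _)).le) hu hv
    have hsq := pow_pos (hpos β) 2
    rw [Pi.zero_apply, ← neg_le_iff_add_nonneg, one_mul, le_div_iff₀ hsq]
    linarith
  simpa [centerMass_univ_eq_div] using hmono hη

/-- Hoeffding's lemma, obtained by integrating `centerMass_le_centerMass_mul_exp` with `u = v`
along the tilt. -/
lemma log_sum_mul_exp_le (hc : ∀ i, 0 < c i) (hη : 0 ≤ η) (hv : ∀ i, v i ∈ Set.Icc 0 H) :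
    log (∑ i, c i * exp (-η * v i))
      ≤ log (∑ i, c i) - η * univ.centerMass c v + η ^ 2 * H ^ 2 / 8 := by
  set M := univ.centerMass c v
  have hpos : ∀ β, 0 < ∑ i, c i * exp (-β * v i) := fun β =>
    sum_pos (fun i _ => mul_pos (hc i) (exp_pos _)) univ_nonempty
  have hden : ∀ β, HasDerivAt (fun β => ∑ i, c i * exp (-β * v i))
      (-∑ i, c i * exp (-β * v i) * v i) β := fun β => by
    simpa using hasDerivAt_sum_mul_exp c v (fun _ => 1) β
  have hderiv : ∀ β, HasDerivAt
      (fun β => log (∑ i, c i * exp (-β * v i)) + β * M - β ^ 2 * (H ^ 2 / 8))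
      (-univ.centerMass (fun i => c i * exp (-β * v i)) v + M - β * (H ^ 2 / 4)) β := fun β => by
    refine ((((hden β).log (hpos β).ne').add ((hasDerivAt_id β).mul_const M)).sub
      ((hasDerivAt_pow 2 β).mul_const (H ^ 2 / 8))).congr_deriv ?_
    simp only [centerMass_univ_eq_div, neg_div]
    push_cast
    ring
  have hanti := antitoneOn_of_hasDerivWithinAt_nonpos (convex_Ici 0)
    (fun β _ => (hderiv β).continuousAt.continuousWithinAt)
    (fun β _ => (hderiv β).hasDerivWithinAt) fun β hβ => by
      rw [interior_Ici] at hβ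
      linarith [centerMass_le_centerMass_mul_exp hc (le_of_lt hβ) hv hv]
  have := hanti Set.self_mem_Ici hη hη
  simp only [neg_zero, zero_mul, exp_zero, mul_one] at this
  linarith

end Tilting

section ExponentialWeights

variable {ι κ : Type*} (P : ι → ℝ) (η : ℝ) (g : κ → ι → ℝ)

/-- The unnormalised posterior of `i` given the losses of the rounds in `S`. -/
noncomputable def expWeight (S : Finset κ) (i : ι) : ℝ := P i * ∏ τ ∈ S, exp (-η * g τ i)

variable {P}

lemma expWeight_pos (hP : ∀ i, 0 < P i) (S : Finset κ) (i : ι) : 0 < expWeight P η g S i :=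
  mul_pos (hP i) (prod_pos fun _ _ => exp_pos _)

lemma log_le_log_sum_expWeight_univ [Fintype ι] [Fintype κ] (hP : ∀ i, 0 < P i) (i₀ : ι) :
    log (P i₀) - η * ∑ τ, g τ i₀ ≤ log (∑ i, expWeight P η g univ i) := by
  have := log_le_log (expWeight_pos η g hP univ i₀)
    (single_le_sum (fun i _ => (expWeight_pos η g hP univ i).le) (mem_univ i₀))
  rw [expWeight, log_mul (hP i₀).ne' (prod_pos fun _ _ => exp_pos _).ne', ← exp_sum,
    log_exp] at this
  simpa only [neg_mul, sum_neg_distrib, ← mul_sum, ← sub_eq_add_neg] using this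

variable {η g} [DecidableEq κ]

lemma expWeight_insert {S : Finset κ} {a : κ} (ha : a ∉ S) :
    expWeight P η g (insert a S) = fun i => expWeight P η g S i * exp (-η * g a i) := by
  ext i
  rw [expWeight, expWeight, prod_insert ha]
  ring

variable [Fintype ι] [Nonempty ι] {H : ℝ}

lemma centerMass_expWeight_le_union (hP : ∀ i, 0 < P i) (hη : 0 ≤ η)
    (hg : ∀ τ i, g τ i ∈ Set.Icc 0 H) {u : ι → ℝ} (hu : ∀ i, u i ∈ Set.Icc 0 H)
    (S E : Finset κ) (hSE : Disjoint S E) :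
    univ.centerMass (expWeight P η g S) u
      ≤ univ.centerMass (expWeight P η g (S ∪ E)) u + η * (H ^ 2 / 4) * #E := by
  induction E using Finset.induction_on with
  | empty => simp
  | insert a E haE ih =>
    rw [disjoint_insert_right] at hSE
    have ha : a ∉ S ∪ E := by simp [hSE.1, haE]
    have htilt := centerMass_le_centerMass_mul_exp (expWeight_pos η g hP (S ∪ E)) hη hu (hg a)
    rw [union_insert, expWeight_insert ha, card_insert_of_notMem haE]
    push_cast
    linarith [ih hSE.2]

lemma centerMass_expWeight_le_of_subset (hP : ∀ i, 0 < P i) (hη : 0 ≤ η)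
    (hg : ∀ τ i, g τ i ∈ Set.Icc 0 H) {u : ι → ℝ} (hu : ∀ i, u i ∈ Set.Icc 0 H)
    {S S' : Finset κ} (hSS' : S ⊆ S') :
    univ.centerMass (expWeight P η g S) u
      ≤ univ.centerMass (expWeight P η g S') u + η * (H ^ 2 / 4) * #(S' \ S) := by
  simpa [union_sdiff_of_subset hSS'] using
    centerMass_expWeight_le_union hP hη hg hu S (S' \ S) disjoint_sdiff

lemma mul_centerMass_expWeight_le (hP : ∀ i, 0 < P i) (hη : 0 ≤ η)
    (hg : ∀ τ i, g τ i ∈ Set.Icc 0 H) {A S : Finset κ} {a : κ} (hAS : A ⊆ S) (ha : a ∉ S) :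
    η * univ.centerMass (expWeight P η g A) (g a)
      ≤ log (∑ i, expWeight P η g S i) - log (∑ i, expWeight P η g (insert a S) i)
        + η ^ 2 * H ^ 2 / 8 + η ^ 2 * H ^ 2 / 4 * #(S \ A) := by
  have hdelay := centerMass_expWeight_le_of_subset hP hη hg (hg a) hAS
  have hhoeffding := log_sum_mul_exp_le (expWeight_pos η g hP S) hη (hg a)
  rw [expWeight_insert ha]
  linarith [mul_le_mul_of_nonneg_left hdelay hη]

theorem sum_centerMass_expWeight_sub_le {T : ℕ} {g : Fin T → ι → ℝ} (hP : ∀ i, 0 < P i)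
    (hP1 : ∑ i, P i ≤ 1) (hη : 0 < η) (hg : ∀ τ i, g τ i ∈ Set.Icc 0 H)
    (A : Fin T → Finset (Fin T)) (hA : ∀ t, A t ⊆ Iio t) (i₀ : ι) :
    ∑ t, univ.centerMass (expWeight P η g (A t)) (g t) - ∑ t, g t i₀
      ≤ -log (P i₀) / η + η * H ^ 2 * T / 8 + η * H ^ 2 / 4 * ∑ t, (#(Iio t \ A t) : ℝ) := by
  set logZ : Finset (Fin T) → ℝ := fun S => log (∑ i, expWeight P η g S i)
  set pre : ℕ → Finset (Fin T) := fun k => {τ | (τ : ℕ) < k}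
  have hround : ∀ t : Fin T, η * univ.centerMass (expWeight P η g (A t)) (g t)
      ≤ logZ (pre t) - logZ (pre (t + 1)) + η ^ 2 * H ^ 2 / 8
        + η ^ 2 * H ^ 2 / 4 * #(Iio t \ A t) := fun t => by
    have hIio : Iio t = pre t := by ext; simp [pre]
    have hsucc : pre (t + 1) = insert t (pre t) := by ext τ; simp [pre, Fin.ext_iff]; omega
    rw [hIio, hsucc]
    exact mul_centerMass_expWeight_le hP hη.le hg (hIio ▸ hA t) (by simp [pre])
  have htelescope : ∑ t : Fin T, (logZ (pre t) - logZ (pre (t + 1))) = logZ ∅ - logZ univ := by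
    rw [Fin.sum_univ_eq_sum_range (fun k => logZ (pre k) - logZ (pre (k + 1))), sum_range_sub']
    congr 3 <;> ext τ <;> simp [pre]
  have hZ_empty : logZ ∅ ≤ 0 :=
    log_nonpos (sum_nonneg fun i _ => (expWeight_pos η g hP ∅ i).le)
      (by simpa [expWeight] using hP1)
  have hZ_univ := log_le_log_sum_expWeight_univ η g hP i₀
  have hsum := sum_le_sum fun t (_ : t ∈ univ) => hround t
  simp only [← mul_sum, sum_add_distrib, sum_const, card_univ, Fintype.card_fin, nsmul_eq_mul,
    htelescope] at hsum
  refine le_of_mul_le_mul_left ?_ hη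
  have hrhs : η * (-log (P i₀) / η + η * H ^ 2 * T / 8
      + η * H ^ 2 / 4 * ∑ t, (#(Iio t \ A t) : ℝ))
      = -log (P i₀) + T * (η ^ 2 * H ^ 2 / 8)
        + η ^ 2 * H ^ 2 / 4 * ∑ t, (#(Iio t \ A t) : ℝ) := by
    field_simp
  rw [hrhs, mul_sub]
  linarith

end ExponentialWeights

section FixedShare

lemma sum_prod_markov {α : Type*} [Fintype α] (f : ℕ → α → α → ℝ)
    (hf : ∀ k a, ∑ b, f k b a = 1) (m : ℕ) :
    ∑ σ : Fin (m + 1) → α, ∏ j : Fin m, f (j + 1) (σ j.succ) (σ j.castSucc)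
      = Fintype.card α := by
  induction m with
  | zero => simp
  | succ m ih =>
    rw [← (Fin.snocEquiv fun _ => α).sum_comp, Fintype.sum_prod_type, sum_comm, ← ih]
    refine sum_congr rfl fun σ _ => ?_
    simp only [Fin.snocEquiv_apply, Fin.prod_univ_castSucc, Fin.succ_castSucc, Fin.snoc_castSucc,
      Fin.succ_last, Fin.snoc_last, Fin.val_castSucc, Fin.val_last, ← mul_sum, hf, mul_one]

variable {N : ℕ}

/-- The Fixed Share transition into the 0-indexed round `k`, i.e. the paper's round `k + 1`,
with switching probability `α = 1 / (k + 1)`. -/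
noncomputable def fixedShareTrans (N k : ℕ) (b a : Fin N) : ℝ :=
  1 / (k + 1) * (1 / N) + (1 - 1 / (k + 1)) * if b = a then 1 else 0

noncomputable def fixedSharePrior (N m : ℕ) (σ : Fin (m + 1) → Fin N) : ℝ :=
  1 / N * ∏ j : Fin m, fixedShareTrans N (j + 1) (σ j.succ) (σ j.castSucc)

def numSwitches {α : Type*} [DecidableEq α] {m : ℕ} (σ : Fin (m + 1) → α) : ℕ :=
  #{j : Fin m | σ j.succ ≠ σ j.castSucc}

lemma sum_fixedShareTrans (hN : 0 < N) (k : ℕ) (a : Fin N) : ∑ b, fixedShareTrans N k b a = 1 := by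
  have : (N : ℝ) ≠ 0 := by positivity
  simp [fixedShareTrans, sum_add_distrib]
  field_simp
  ring

lemma fixedShareTrans_pos (hN : 0 < N) (k : ℕ) (b a : Fin N) : 0 < fixedShareTrans N k b a := by
  have : 1 / ((k : ℝ) + 1) ≤ 1 := div_le_one_of_le₀ (by simp) (by positivity)
  have : 0 < 1 / ((k : ℝ) + 1) * (1 / N) := by positivity
  unfold fixedShareTrans
  split_ifs <;> nlinarith

lemma le_fixedShareTrans (hN : 0 < N) {k M : ℕ} (hk : 1 ≤ k) (hkM : k ≤ M) (b a : Fin N) :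
    (k : ℝ) / (k + 1) * (if b = a then 1 else 1 / ((N : ℝ) * M)) ≤ fixedShareTrans N k b a := by
  have hk0 : (0 : ℝ) < k := by exact_mod_cast hk
  have hkM' : (k : ℝ) ≤ M := by exact_mod_cast hkM
  have hN' : (0 : ℝ) < N := by exact_mod_cast hN
  unfold fixedShareTrans
  split_ifs
  · have : (0 : ℝ) ≤ 1 / (k + 1) * (1 / N) := by positivity
    have : (1 : ℝ) - 1 / (k + 1) = k / (k + 1) := by field_simp; ring
    linarith
  · rw [mul_zero, add_zero, div_mul_div_comm, div_mul_div_comm,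
      div_le_div_iff₀ (mul_pos (by positivity) (mul_pos hN' (by linarith))) (by positivity)]
    nlinarith [mul_le_mul_of_nonneg_left hkM' (by positivity : (0 : ℝ) ≤ (k + 1) * N)]

lemma prod_fin_div_succ (m : ℕ) :
    ∏ j : Fin m, (((j + 1 : ℕ) : ℝ) / ((j + 1 : ℕ) + 1)) = 1 / (m + 1) := by
  rw [Fin.prod_univ_eq_prod_range (fun k => ((k + 1 : ℕ) : ℝ) / ((k + 1 : ℕ) + 1))]
  induction m with
  | zero => simp
  | succ m ih =>
    rw [prod_range_succ, ih]
    push_cast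
    field_simp

lemma sum_fixedSharePrior (hN : 0 < N) (m : ℕ) : ∑ σ, fixedSharePrior N m σ = 1 := by
  have : (N : ℝ) ≠ 0 := by positivity
  simp only [fixedSharePrior, ← mul_sum, sum_prod_markov _ (fun k => sum_fixedShareTrans hN k),
    Fintype.card_fin]
  field_simp

lemma fixedSharePrior_pos (hN : 0 < N) {m : ℕ} (σ : Fin (m + 1) → Fin N) :
    0 < fixedSharePrior N m σ :=
  mul_pos (by positivity) (prod_pos fun _ _ => fixedShareTrans_pos hN _ _ _)

lemma pow_numSwitches_le_fixedSharePrior (hN : 0 < N) {m : ℕ} (ν : Fin (m + 1) → Fin N) :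
    (1 / (N * (m + 1 : ℕ)) : ℝ) ^ (numSwitches ν + 1) ≤ fixedSharePrior N m ν := by
  set c : ℝ := 1 / (N * (m + 1 : ℕ))
  have hswitch : ∏ j : Fin m, (if ν j.succ = ν j.castSucc then 1 else c) = c ^ numSwitches ν := by
    rw [prod_ite, prod_const_one, prod_const, one_mul]
    rfl
  have hfactor : ∀ j : Fin m, ((j + 1 : ℕ) : ℝ) / ((j + 1 : ℕ) + 1)
      * (if ν j.succ = ν j.castSucc then 1 else c)
      ≤ fixedShareTrans N (j + 1) (ν j.succ) (ν j.castSucc) := fun j =>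
    le_fixedShareTrans hN (Nat.le_add_left 1 j) (by omega) _ _
  calc c ^ (numSwitches ν + 1)
      = 1 / N * ((∏ j : Fin m, ((j + 1 : ℕ) : ℝ) / ((j + 1 : ℕ) + 1))
          * ∏ j : Fin m, (if ν j.succ = ν j.castSucc then 1 else c)) := by
        have hc : c = 1 / N * (1 / (m + 1)) := by
          rw [one_div_mul_one_div, ← Nat.cast_succ]
        rw [hswitch, prod_fin_div_succ, pow_succ', ← mul_assoc, ← hc]
    _ ≤ fixedSharePrior N m ν := by
        rw [← prod_mul_distrib]
        exact mul_le_mul_of_nonneg_left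
          (prod_le_prod (fun j _ => by positivity) fun j _ => hfactor j) (by positivity)

lemma neg_log_fixedSharePrior_le (hN : 0 < N) {m : ℕ} (ν : Fin (m + 1) → Fin N) :
    -log (fixedSharePrior N m ν) ≤ (numSwitches ν + 1) * (log N + log (m + 1 : ℕ)) := by
  have := log_le_log (by positivity) (pow_numSwitches_le_fixedSharePrior hN ν)
  rw [log_pow, one_div, log_inv, log_mul (by positivity) (by positivity)] at this
  push_cast at this ⊢
  linarith

lemma univ_filter_one_le_eq_map_succ (m : ℕ) :
    ({i : Fin (m + 1) | 1 ≤ (i : ℕ)} : Finset _) = univ.map (Fin.succEmb m) := by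
  ext i
  cases i using Fin.cases <;> simp

end FixedShare

/-- A loss revealed with delay `D τ` is missing at the `D τ` rounds strictly between `τ` and
`τ + 1 + D τ`. -/
lemma sum_card_Iio_sdiff_le {T : ℕ} (D : Fin T → ℕ) :
    ∑ t : Fin T, #(Iio t \ univ.filter fun τ : Fin T => (τ : ℕ) + 1 + D τ ≤ t) ≤ ∑ τ, D τ := by
  let r : Fin T → Fin T → Prop := fun t τ => τ < t ∧ ¬ (τ : ℕ) + 1 + D τ ≤ t
  have hmissing : ∀ t : Fin T,
      Iio t \ univ.filter fun τ : Fin T => (τ : ℕ) + 1 + D τ ≤ t = univ.bipartiteAbove r t :=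
    fun t => by ext τ; simp [r, bipartiteAbove]
  simp only [hmissing, sum_card_bipartiteAbove_eq_sum_card_bipartiteBelow]
  refine sum_le_sum fun τ _ => ?_
  calc #(univ.bipartiteBelow r τ) ≤ #(Ioo (τ : ℕ) (τ + 1 + D τ)) :=
        card_le_card_of_injOn Fin.val (fun t ht => by
          simp only [bipartiteBelow, r, coe_filter, mem_univ, true_and, Set.mem_ofPred_eq] at ht
          simp only [coe_Ioo, Set.mem_Ioo]
          omega) Fin.val_injective.injOn
    _ = D τ := by simp only [Nat.card_Ioo]; omega

theorem stmt_16_general (N T : ℕ) (hN : 1 ≤ N) (hT : 0 < T) (η H : ℝ)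
    (hη : 0 < η)
    (l : Fin T → Fin N → ℝ) (hl : ∀ t n, l t n ∈ Set.Icc (0 : ℝ) H)
    (D : Fin T → ℕ)
    (P : (Fin T → Fin N) → ℝ)
    (hP : ∀ σ, P σ = (1 / (N : ℝ)) *
      ∏ i ∈ Finset.univ.filter (fun i : Fin T => 1 ≤ i.val),
        ((1 / ((i : ℕ) + 1 : ℝ)) * (1 / (N : ℝ))
          + (1 - 1 / ((i : ℕ) + 1 : ℝ)) *
            (if σ i = σ ⟨i.val - 1, Nat.lt_of_le_of_lt (Nat.sub_le _ _) i.isLt⟩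
              then 1 else 0)))
    (w : Fin T → Fin N → ℝ)
    (hw : ∀ t n, w t n =
      (∑ σ ∈ Finset.univ.filter (fun σ : Fin T → Fin N => σ t = n),
          P σ * ∏ τ ∈ Finset.univ.filter
              (fun τ : Fin T => (τ : ℕ) + 1 + D τ ≤ (t : ℕ)),
            Real.exp (-η * l τ (σ τ))) /
      (∑ σ : Fin T → Fin N,
          P σ * ∏ τ ∈ Finset.univ.filter
              (fun τ : Fin T => (τ : ℕ) + 1 + D τ ≤ (t : ℕ)),
            Real.exp (-η * l τ (σ τ))))
    (ν : Fin T → Fin N) (K : ℕ)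
    (hK : K = (Finset.univ.filter (fun t : Fin T => 1 ≤ t.val ∧
        ν t ≠ ν ⟨t.val - 1, Nat.lt_of_le_of_lt (Nat.sub_le _ _) t.isLt⟩)).card) :
    (∑ t : Fin T, ∑ n, w t n * l t n) - ∑ t : Fin T, l t (ν t)
      ≤ (K + 1 : ℝ) * (Real.log N + Real.log T) / η
        + η * H ^ 2 * T / 8
        + η * H ^ 2 / 4 * ∑ t : Fin T, (D t : ℝ) := by
  obtain ⟨m, rfl⟩ := Nat.exists_eq_add_one_of_ne_zero hT.ne'
  have : Nonempty (Fin N) := ⟨⟨0, hN⟩⟩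
  have hPeq : P = fixedSharePrior N m := funext fun σ => by
    rw [hP, univ_filter_one_le_eq_map_succ, prod_map]
    rfl
  subst hPeq
  have hK' : K = numSwitches ν := by
    rw [hK, ← filter_filter, univ_filter_one_le_eq_map_succ, filter_map, card_map]
    rfl
  set A : Fin (m + 1) → Finset (Fin (m + 1)) := fun t => {τ | (τ : ℕ) + 1 + D τ ≤ t}
  have hA : ∀ t, A t ⊆ Iio t := fun t τ hτ => by
    simp only [A, mem_filter] at hτ
    simp only [mem_Iio, Fin.lt_def]
    omega
  set g : Fin (m + 1) → (Fin (m + 1) → Fin N) → ℝ := fun τ σ => l τ (σ τ)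
  have hmean : ∀ t, ∑ n, w t n * l t n
      = univ.centerMass (expWeight (fixedSharePrior N m) η g (A t)) (g t) := fun t => by
    simp only [hw]
    exact sum_fiber_div_mul_eq_centerMass (expWeight _ η g (A t)) (fun σ => σ t) (l t)
  have hregret := sum_centerMass_expWeight_sub_le (fixedSharePrior_pos hN)
    (sum_fixedSharePrior hN m).le hη (fun τ σ => hl τ (σ τ)) A hA ν
  have hprior := neg_log_fixedSharePrior_le hN ν
  have hdelay : ∑ t, (#(Iio t \ A t) : ℝ) ≤ ∑ t, (D t : ℝ) := by
    exact_mod_cast sum_card_Iio_sdiff_le D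
  simp only [hmean, hK']
  refine hregret.trans ?_
  gcongr

/-- Regret bound for delayed Fixed Share (Eq. (18) of the paper). Time steps are
indexed by `Fin T` (index `i` is the paper's step `i+1`); the Fixed Share hidden
Markov model uses the uniform prior `1/N` and switch probabilities `α_t = 1/t`
(i.e. `1/(i+1)` at index `i`). The weights are the Bayesian posteriors
`w t n = p(n_t = n | revealed losses 𝒟_{t-1})` with
`𝒟_{t-1} = {τ : (τ+1) + D τ ≤ t}`. Then for any comparison sequence `ν` with `K`
switches, the regret is at most
`(K+1)(ln N + ln T)/η + η H² T/8 + (η H²/4) Σ_t D t`. -/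
theorem stmt_16 (N T : ℕ) (hN : 1 ≤ N) (hT : 0 < T) (η H : ℝ)
    (hη : 0 < η) (hH : 0 < H)
    (l : Fin T → Fin N → ℝ) (hl : ∀ t n, l t n ∈ Set.Icc (0 : ℝ) H)
    (D : Fin T → ℕ) (hD : ∀ τ : Fin T, (τ : ℕ) + 1 + D τ ≤ T)
    (P : (Fin T → Fin N) → ℝ)
    (hP : ∀ σ, P σ = (1 / (N : ℝ)) *
      ∏ i ∈ Finset.univ.filter (fun i : Fin T => 1 ≤ i.val),
        ((1 / ((i : ℕ) + 1 : ℝ)) * (1 / (N : ℝ))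
          + (1 - 1 / ((i : ℕ) + 1 : ℝ)) *
            (if σ i = σ ⟨i.val - 1, Nat.lt_of_le_of_lt (Nat.sub_le _ _) i.isLt⟩
              then 1 else 0)))
    (w : Fin T → Fin N → ℝ)
    (hw : ∀ t n, w t n =
      (∑ σ ∈ Finset.univ.filter (fun σ : Fin T → Fin N => σ t = n),
          P σ * ∏ τ ∈ Finset.univ.filter
              (fun τ : Fin T => (τ : ℕ) + 1 + D τ ≤ (t : ℕ)),
            Real.exp (-η * l τ (σ τ))) /
      (∑ σ : Fin T → Fin N,
          P σ * ∏ τ ∈ Finset.univ.filter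
              (fun τ : Fin T => (τ : ℕ) + 1 + D τ ≤ (t : ℕ)),
            Real.exp (-η * l τ (σ τ))))
    (ν : Fin T → Fin N) (K : ℕ)
    (hK : K = (Finset.univ.filter (fun t : Fin T => 1 ≤ t.val ∧
        ν t ≠ ν ⟨t.val - 1, Nat.lt_of_le_of_lt (Nat.sub_le _ _) t.isLt⟩)).card) :
    (∑ t : Fin T, ∑ n, w t n * l t n) - ∑ t : Fin T, l t (ν t)
      ≤ (K + 1 : ℝ) * (Real.log N + Real.log T) / η
        + η * H ^ 2 * T / 8
        + η * H ^ 2 / 4 * ∑ t : Fin T, (D t : ℝ) :=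
  stmt_16_general N T hN hT η H hη l hl D P hP w hw ν K hK
end
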